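/- arXiv:2504.19781 — 3 statements merged into one kernel-verified Lean document; each statement's English description precedes it below -/
import Mathlib

section
/- For every integer n ≥ 2, the q-Λ-variation of h_n satisfies V_{Λ,q}(h_n) ≤ 2^{−n}; that is, for every finite family {I_i}_{i=1}^m of pairwise non-overlapping closed subintervals of [0,1], (Σ_{i=1}^m |h_n(I_i)|^q/λ_i)^{1/q} ≤ 2^{−n}. -/
open Filter Set
open scoped ENNReal Classical

noncomputable section

/-- `Λ = （λ_i)_{i≥1}` is a Waterman sequence: positive, nondecreasing, `λ_1 = 1`,
and `∑ 1/λ_i = ∞`. -/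
def WatermanSeq (lam : ℕ → ℝ) : Prop :=
  (∀ i, 0 < lam i) ∧ Monotone lam ∧ lam 1 = 1 ∧
    Tendsto (fun n => ∑ i ∈ Finset.Icc 1 n, 1 / lam i) atTop atTop

/-- `Λ(M) = ∑_{i=1}^{M} 1/λ_i`. -/
def LamSum (lam : ℕ → ℝ) (M : ℕ) : ℝ := ∑ i ∈ Finset.Icc 1 M, 1 / lam i

/-- `{[a i, b i]}_{i < m}` is a finite family of pairwise non-overlapping closed
subintervals of `[0,1]`. -/
def NonOverlapping (m : ℕ) (a b : ℕ → ℝ) : Prop :=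
  (∀ i < m, 0 ≤ a i ∧ a i ≤ b i ∧ b i ≤ 1) ∧
    ∀ i < m, ∀ j < m, i ≠ j → b i ≤ a j ∨ b j ≤ a i

/-- `(∑_{i=1}^m |f(I_i)|^s / λ_i)^{1/s}` for the family `I_i = [a i, b i]`. -/
def vSum (lam : ℕ → ℝ) (s : ℝ) (f : ℝ → ℝ) (m : ℕ) (a b : ℕ → ℝ) : ℝ :=
  (∑ i ∈ Finset.range m, |f (b i) - f (a i)| ^ s / lam (i + 1)) ^ (1 / s)

/-- The `s`-`Λ`-variation `V_{Λ,s}(f)`, an element of `[0,∞]`. -/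
def variation (lam : ℕ → ℝ) (s : ℝ) (f : ℝ → ℝ) : ℝ≥0∞ :=
  ⨆ (m : ℕ) (a : ℕ → ℝ) (b : ℕ → ℝ) (_ : NonOverlapping m a b),
    ENNReal.ofReal (vSum lam s f m a b)

/-- `M_n = 2^(3n-1)`. -/
def Mseq (n : ℕ) : ℕ := 2 ^ (3 * n - 1)

/-- `b_{n,j} = 2^{-n} + (2j-2)/2^{4n}`. -/
def bb (n j : ℕ) : ℝ := ((2 : ℝ) ^ n)⁻¹ + (2 * (j : ℝ) - 2) / 2 ^ (4 * n)

/-- `c_{n,j} = 2^{-n} + (2j-1)/2^{4n}`. -/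
def cc (n j : ℕ) : ℝ := ((2 : ℝ) ^ n)⁻¹ + (2 * (j : ℝ) - 1) / 2 ^ (4 * n)

/-- The function `h_n`. -/
def hfun (lam : ℕ → ℝ) (q : ℝ) (n : ℕ) (y : ℝ) : ℝ :=
  if ∃ j, 1 ≤ j ∧ j ≤ (Mseq n - 2) / 2 ∧ y ∈ Set.Ico (bb n j) (cc n j) then
    ((2 : ℝ) ^ n)⁻¹ * LamSum lam (Mseq n) ^ (-(1 / q))
  else 0

/-- `h = ∑_{n=2}^∞ h_n`. -/
def hh (lam : ℕ → ℝ) (q : ℝ) (y : ℝ) : ℝ := ∑' n : ℕ, hfun lam q (n + 2) y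

/-- The sequence `r`: `r_{2k} = c_{k+2,(M_{k+2}-2)/2}`, `r_{2k+1} = b_{k+2,(M_{k+2}-2)/2}`. -/
def rr (i : ℕ) : ℝ :=
  if i % 2 = 0 then cc (i / 2 + 2) ((Mseq (i / 2 + 2) - 2) / 2)
  else bb (i / 2 + 2) ((Mseq (i / 2 + 2) - 2) / 2)

/-- `f(J_i) = f(r_{i-1}) - f(r_i)` where `J_i = [r_i, r_{i-1}]` (for `i ≥ 1`). -/
def incrJ (f : ℝ → ℝ) (i : ℕ) : ℝ := f (rr (i - 1)) - f (rr i)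

/-- `p_{(n_k)}(j) = (-1)^{k+1}` if `j = n_k` for some `k ≥ 1`, and `0` otherwise. -/
def psgn (nseq : ℕ → ℕ) (j : ℕ) : ℝ :=
  if h : ∃ k, 1 ≤ k ∧ nseq k = j then (-1 : ℝ) ^ (h.choose + 1) else 0

/-- The `j`-th (here `j = m+1`, `m : ℕ`) term of the series defining `L_{(n_k)}`:
`p_{(n_k)}(j) ∑_{i=1}^2 (-1)^i f(J_{2(j-1)+i}) |h(J_{2(j-1)+i})| / λ_{2(j-1)+i}`. -/
def Lterm (lam : ℕ → ℝ) (q : ℝ) (nseq : ℕ → ℕ) (f : ℝ → ℝ) (m : ℕ) : ℝ :=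
  psgn nseq (m + 1) * ∑ i ∈ Finset.Icc 1 2,
    (-1 : ℝ) ^ i * incrJ f (2 * m + i) * |incrJ (hh lam q) (2 * m + i)| / lam (2 * m + i)

/-- The functional `L_{(n_k)}(f) = f(J') + ∑_{j=1}^∞ (…)`, with `J' = [3/8, 3/8 + 2⁻⁸]`. -/
def Lfun (lam : ℕ → ℝ) (q : ℝ) (nseq : ℕ → ℕ) (f : ℝ → ℝ) : ℝ :=
  (f (3 / 8 + 1 / 2 ^ 8) - f (3 / 8)) + ∑' m : ℕ, Lterm lam q nseq f m

/-- The tent function `f_l`. -/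
def tent (nseq : ℕ → ℕ) (l : ℕ) (x : ℝ) : ℝ :=
  if 3 / 8 < x ∧ x ≤ 3 / 8 + 1 / 2 ^ 8 then psgn nseq l
  else if rr (2 * l) ≤ x ∧ x ≤ rr (2 * l - 1) then
    (x - rr (2 * l)) / (rr (2 * l - 1) - rr (2 * l))
  else if rr (2 * l - 1) ≤ x ∧ x ≤ rr (2 * l - 2) then
    (rr (2 * l - 2) - x) / (rr (2 * l - 2) - rr (2 * l - 1))
  else 0


/-!
`h_n` takes only the values `0` and `v = 2^{-n} Λ(M_n)^{-1/q}`, and it changes value only at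
the at most `M_n` endpoints `b_{n,j}`, `c_{n,j}`. The half-open intervals `(a_i, b_i]` of a
non-overlapping family are disjoint, so at most `M_n` increments `h_n(I_i)` are nonzero, each
of size at most `v`. As `1/λ_i` is nonincreasing, `∑ |h_n(I_i)|^q / λ_i ≤ v^q Λ(M_n) = 2^{-nq}`.
-/

open Finset

theorem sum_le_sum_range_card_of_antitone {α : Type*} [AddCommMonoid α] [PartialOrder α]
    [IsOrderedAddMonoid α] {w : ℕ → α} (hw : Antitone w) (S : Finset ℕ) :
    ∑ i ∈ S, w i ≤ ∑ i ∈ range #S, w i := by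
  induction S using Finset.induction_on_max with
  | empty => simp
  | insert a s ha ih =>
    have has : a ∉ s := fun h => lt_irrefl a (ha a h)
    have hcard : #s ≤ a := by
      simpa using Finset.card_le_card (fun x hx => mem_range.2 (ha x hx) : s ⊆ range a)
    rw [sum_insert has, card_insert_of_notMem has, sum_range_succ, add_comm]
    exact add_le_add ih (hw hcard)

section Waterman

variable {lam : ℕ → ℝ}

theorem lamSum_eq_sum_range (M : ℕ) : LamSum lam M = ∑ i ∈ range M, 1 / lam (i + 1) := by
  rw [LamSum, range_eq_Ico, sum_Ico_add' (fun i => 1 / lam i), zero_add,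
    Finset.Ico_add_one_right_eq_Icc]

variable (hpos : ∀ i, 0 < lam i)
include hpos

theorem lamSum_nonneg (M : ℕ) : 0 ≤ LamSum lam M :=
  sum_nonneg fun i _ => (one_div_pos.2 (hpos i)).le

theorem lamSum_mono : Monotone (LamSum lam) := fun _ _ h =>
  sum_le_sum_of_subset_of_nonneg (Icc_subset_Icc_right h) fun i _ _ => (one_div_pos.2 (hpos i)).le

theorem lamSum_pos {M : ℕ} (hM : 1 ≤ M) : 0 < LamSum lam M :=
  sum_pos (fun i _ => one_div_pos.2 (hpos i)) ⟨1, mem_Icc.2 ⟨le_rfl, hM⟩⟩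

theorem sum_one_div_le_lamSum_card (hmono : Monotone lam) (S : Finset ℕ) :
    ∑ i ∈ S, 1 / lam (i + 1) ≤ LamSum lam #S := by
  rw [lamSum_eq_sum_range]
  exact sum_le_sum_range_card_of_antitone
    (fun i j hij => one_div_le_one_div_of_le (hpos _) (hmono (Nat.succ_le_succ hij))) S

end Waterman

def JumpsIn (f : ℝ → ℝ) (T : Finset ℝ) : Prop :=
  ∀ x y, x ≤ y → (∀ t ∈ T, t ∉ Set.Ioc x y) → f x = f y

theorem card_filter_ne_le_card_of_jumpsIn {f : ℝ → ℝ} {T : Finset ℝ} (hf : JumpsIn f T)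
    {m : ℕ} {a b : ℕ → ℝ} (hab : NonOverlapping m a b) :
    #{i ∈ range m | f (b i) ≠ f (a i)} ≤ #T := by
  set S := {i ∈ range m | f (b i) ≠ f (a i)}
  let jumps (i : ℕ) : Finset ℝ := {t ∈ T | t ∈ Set.Ioc (a i) (b i)}
  have hS : ∀ i ∈ S, i < m ∧ f (b i) ≠ f (a i) := fun i hi => by simpa [S] using hi
  have hdisj : (S : Set ℕ).PairwiseDisjoint jumps := by
    intro i hi j hj hij
    have hij' := hab.2 i (hS i hi).1 j (hS j hj).1 hij
    refine disjoint_filter_filter' _ _ ?_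
    rcases hij' with h | h
    · exact Set.Ioc_disjoint_Ioc_of_le h
    · exact (Set.Ioc_disjoint_Ioc_of_le h).symm
  have hne : ∀ i ∈ S, (jumps i).Nonempty := by
    intro i hi
    by_contra hempty
    refine (hS i hi).2 (hf _ _ (hab.1 i (hS i hi).1).2.1 fun t ht hmem => hempty ?_).symm
    exact ⟨t, mem_filter.2 ⟨ht, hmem⟩⟩
  calc #S ≤ #(S.biUnion jumps) := card_le_card_biUnion hdisj hne
    _ ≤ #T := card_le_card (biUnion_subset.2 fun _ _ => filter_subset _ _)

theorem sum_abs_sub_rpow_div_le {lam : ℕ → ℝ} (hpos : ∀ i, 0 < lam i) (hmono : Monotone lam)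
    {q : ℝ} (hq : 0 < q) {f : ℝ → ℝ} {v : ℝ} (hv : ∀ x y, |f x - f y| ≤ v) (m : ℕ)
    (a b : ℕ → ℝ) :
    ∑ i ∈ range m, |f (b i) - f (a i)| ^ q / lam (i + 1)
      ≤ v ^ q * LamSum lam #{i ∈ range m | f (b i) ≠ f (a i)} := by
  have hv0 : 0 ≤ v := (abs_nonneg _).trans (hv 0 0)
  have hzero : ∀ i, f (b i) = f (a i) → |f (b i) - f (a i)| ^ q / lam (i + 1) = 0 := by
    intro i h
    rw [h, sub_self, abs_zero, Real.zero_rpow hq.ne', zero_div]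
  rw [← sum_filter_of_ne fun i _ h => mt (hzero i) h]
  calc _ ≤ ∑ i ∈ range m with f (b i) ≠ f (a i), v ^ q / lam (i + 1) :=
        sum_le_sum fun i _ => div_le_div_of_nonneg_right
          (Real.rpow_le_rpow (abs_nonneg _) (hv _ _) hq.le) (hpos _).le
    _ = v ^ q * ∑ i ∈ range m with f (b i) ≠ f (a i), 1 / lam (i + 1) := by
        simp only [mul_sum, mul_one_div]
    _ ≤ _ := mul_le_mul_of_nonneg_left (sum_one_div_le_lamSum_card hpos hmono _)
        (Real.rpow_nonneg hv0 q)

theorem vSum_le_of_jumpsIn {lam : ℕ → ℝ} (hpos : ∀ i, 0 < lam i) (hmono : Monotone lam)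
    {q : ℝ} (hq : 0 < q) {f : ℝ → ℝ} {T : Finset ℝ} (hf : JumpsIn f T) {v : ℝ}
    (hv : ∀ x y, |f x - f y| ≤ v) {K : ℕ} (hT : #T ≤ K) {m : ℕ} {a b : ℕ → ℝ}
    (hab : NonOverlapping m a b) :
    vSum lam q f m a b ≤ v * LamSum lam K ^ (1 / q) := by
  have hv0 : 0 ≤ v := (abs_nonneg _).trans (hv 0 0)
  have hsum := (sum_abs_sub_rpow_div_le hpos hmono hq hv m a b).trans
    (mul_le_mul_of_nonneg_left (lamSum_mono hpos
      ((card_filter_ne_le_card_of_jumpsIn hf hab).trans hT)) (Real.rpow_nonneg hv0 q))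
  calc vSum lam q f m a b ≤ (v ^ q * LamSum lam K) ^ (1 / q) :=
        Real.rpow_le_rpow (sum_nonneg fun i _ => div_nonneg (Real.rpow_nonneg (abs_nonneg _) _)
          (hpos _).le) hsum (by positivity)
    _ = v * LamSum lam K ^ (1 / q) := by
        rw [Real.mul_rpow (Real.rpow_nonneg hv0 q) (lamSum_nonneg hpos K), ← Real.rpow_mul hv0,
          mul_one_div_cancel hq.ne', Real.rpow_one]

theorem mem_Ico_iff_of_notMem_Ioc {α : Type*} [LinearOrder α] {x y c d : α} (hxy : x ≤ y)
    (hc : c ∉ Set.Ioc x y) (hd : d ∉ Set.Ioc x y) : x ∈ Set.Ico c d ↔ y ∈ Set.Ico c d := by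
  simp only [Set.mem_Ioc, Set.mem_Ico, not_and, not_le] at *
  constructor
  · rintro ⟨hcx, hxd⟩
    exact ⟨hcx.trans hxy, hd hxd⟩
  · rintro ⟨hcy, hyd⟩
    have hcx : c ≤ x := not_lt.1 fun hxc => (hc hxc).not_ge hcy
    exact ⟨hcx, hxy.trans_lt hyd⟩

def hfunJumps (n : ℕ) : Finset ℝ :=
  (Finset.Icc 1 ((Mseq n - 2) / 2)).image (bb n) ∪
    (Finset.Icc 1 ((Mseq n - 2) / 2)).image (cc n)

theorem card_hfunJumps_le (n : ℕ) : #(hfunJumps n) ≤ Mseq n := by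
  calc #(hfunJumps n) ≤ (Mseq n - 2) / 2 + (Mseq n - 2) / 2 := by
        refine (Finset.card_union_le _ _).trans (add_le_add ?_ ?_) <;>
          exact card_image_le.trans (Nat.card_Icc _ _).le
    _ ≤ Mseq n := by omega

theorem hfun_jumpsIn (lam : ℕ → ℝ) (q : ℝ) (n : ℕ) : JumpsIn (hfun lam q n) (hfunJumps n) := by
  intro x y hxy hT
  have hmem : ∀ j ∈ Finset.Icc 1 ((Mseq n - 2) / 2), x ∈ Set.Ico (bb n j) (cc n j) ↔
      y ∈ Set.Ico (bb n j) (cc n j) := fun j hj =>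
    mem_Ico_iff_of_notMem_Ioc hxy (hT _ (mem_union_left _ (mem_image_of_mem _ hj)))
      (hT _ (mem_union_right _ (mem_image_of_mem _ hj)))
  have hplateau : (∃ j, 1 ≤ j ∧ j ≤ (Mseq n - 2) / 2 ∧ x ∈ Set.Ico (bb n j) (cc n j)) ↔
      ∃ j, 1 ≤ j ∧ j ≤ (Mseq n - 2) / 2 ∧ y ∈ Set.Ico (bb n j) (cc n j) :=
    exists_congr fun j => and_congr_right fun h1 => and_congr_right fun h2 =>
      hmem j (mem_Icc.2 ⟨h1, h2⟩)
  simp only [hfun, hplateau]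

theorem abs_hfun_sub_le {lam : ℕ → ℝ} (hpos : ∀ i, 0 < lam i) (q : ℝ) (n : ℕ) (x y : ℝ) :
    |hfun lam q n x - hfun lam q n y| ≤ ((2 : ℝ) ^ n)⁻¹ * LamSum lam (Mseq n) ^ (-(1 / q)) := by
  have hv : 0 ≤ ((2 : ℝ) ^ n)⁻¹ * LamSum lam (Mseq n) ^ (-(1 / q)) :=
    mul_nonneg (by positivity) (Real.rpow_nonneg (lamSum_nonneg hpos _) _)
  unfold hfun
  split_ifs <;> simp only [sub_self, sub_zero, zero_sub, abs_neg, abs_zero, abs_of_nonneg hv,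
    le_refl, hv]

theorem stmt2_general (lam : ℕ → ℝ) (hlam : WatermanSeq lam) (q : ℝ)
    (hq : 1 < q) (n : ℕ) (m : ℕ) (a b : ℕ → ℝ) (hab : NonOverlapping m a b) :
    vSum lam q (hfun lam q n) m a b ≤ ((2 : ℝ) ^ n)⁻¹ := by
  obtain ⟨hpos, hmono, -, -⟩ := hlam
  have hL : 0 < LamSum lam (Mseq n) := lamSum_pos hpos Nat.one_le_two_pow
  calc vSum lam q (hfun lam q n) m a b
      ≤ ((2 : ℝ) ^ n)⁻¹ * LamSum lam (Mseq n) ^ (-(1 / q)) * LamSum lam (Mseq n) ^ (1 / q) :=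
        vSum_le_of_jumpsIn hpos hmono (zero_lt_one.trans hq) (hfun_jumpsIn lam q n)
          (abs_hfun_sub_le hpos q n) (card_hfunJumps_le n) hab
    _ = ((2 : ℝ) ^ n)⁻¹ := by
        rw [Real.rpow_neg hL.le, mul_assoc, inv_mul_cancel₀ (Real.rpow_pos_of_pos hL _).ne',
          mul_one]

/-- for `n ≥ 2`, `V_{Λ,q}(h_n) ≤ 2^{-n}`: for every finite family of pairwise
non-overlapping closed subintervals of `[0,1]`,
`(∑_{i=1}^m |h_n(I_i)|^q/λ_i)^{1/q} ≤ 2^{-n}`. -/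
theorem stmt2 (lam : ℕ → ℝ) (hlam : WatermanSeq lam) (p q : ℝ)
    (hp : 1 < p) (hq : 1 < q) (hpq : 1 / p + 1 / q = 1)
    (n : ℕ) (hn : 2 ≤ n) (m : ℕ) (a b : ℕ → ℝ) (hab : NonOverlapping m a b) :
    vSum lam q (hfun lam q n) m a b ≤ ((2 : ℝ) ^ n)⁻¹ :=
  stmt2_general lam hlam q hq n m a b hab
end
end

section
/- For every f : [0,1] → ℝ with V_{Λ,p}(f) < ∞ and every strictly increasing sequence (n_k) of positive integers, the double series Σ_{j=1}^∞ p_{(n_k)}(j) Σ_{i=1}^{2} (−1)^i f(J_{2(j−1)+i})·|h(J_{2(j−1)+i})|/λ_{2(j−1)+i} converges absolutely, and its absolute value is at most V_{Λ,p}(f)·V_{Λ,q}(h). In particular the functional L_{(n_k)} is well-defined on ΛBV^{(p)}. -/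
/-!
The intervals `J_i = [r_i, r_{i-1}]` are non-overlapping, so Hölder's inequality for the
weights `1/λ_i` bounds every partial sum of `∑_i |f(J_i)| |h(J_i)| / λ_i`, which dominates the
partial sums of the series, by `V_{Λ,p}(f) V_{Λ,q}(h)`. Absolute convergence needs no finiteness
of `V_{Λ,q}(h)`: `|f(J_i)| ≤ V_{Λ,p}(f)`, and since `r_i < 2^{-(⌊i/2⌋+1)}` while `h ≤ 2^{-(k+1)}`
on `[0, 2^{-(k+1)})`, the increments `h(J_i)` decay geometrically.
-/

open Filter Set
open scoped ENNReal Classical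

noncomputable section

section Variation

variable {lam : ℕ → ℝ}

lemma ofReal_vSum_le_variation {s : ℝ} {f : ℝ → ℝ} {m : ℕ} {a b : ℕ → ℝ}
    (h : NonOverlapping m a b) : ENNReal.ofReal (vSum lam s f m a b) ≤ variation lam s f :=
  le_iSup_of_le m <| le_iSup_of_le a <| le_iSup_of_le b <| le_iSup_of_le h le_rfl

lemma abs_sub_le_toReal_variation (hlam1 : lam 1 = 1) {s : ℝ} (hs : s ≠ 0) {f : ℝ → ℝ}
    (hf : variation lam s f ≠ ⊤) {x y : ℝ} (hy : 0 ≤ y) (hyx : y ≤ x) (hx : x ≤ 1) :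
    |f x - f y| ≤ (variation lam s f).toReal := by
  have hone : NonOverlapping 1 (fun _ => y) (fun _ => x) :=
    ⟨fun _ _ => ⟨hy, hyx, hx⟩, fun i hi j hj hij => absurd (by omega) hij⟩
  have hv : vSum lam s f 1 (fun _ => y) (fun _ => x) = |f x - f y| := by
    rw [vSum, Finset.sum_range_one, hlam1, div_one, ← Real.rpow_mul (abs_nonneg _),
      mul_one_div_cancel hs, Real.rpow_one]
  rw [← ENNReal.ofReal_le_iff_le_toReal hf, ← hv]
  exact ofReal_vSum_le_variation hone

/-- Hölder's inequality for the weights `1 / λ_i`: split each weight as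
`λ_i^{-1/p} · λ_i^{-1/q}`. -/
lemma sum_abs_mul_abs_div_le_vSum_mul_vSum (hlam : ∀ i, 0 < lam i) {p q : ℝ}
    (hpq : p.HolderConjugate q) (f g : ℝ → ℝ) (m : ℕ) (a b : ℕ → ℝ) :
    ∑ i ∈ Finset.range m, |f (b i) - f (a i)| * |g (b i) - g (a i)| / lam (i + 1)
      ≤ vSum lam p f m a b * vSum lam q g m a b := by
  set w : ℕ → ℝ := fun i => (lam (i + 1))⁻¹
  have hw : ∀ i, 0 < w i := fun i => inv_pos.mpr (hlam _)
  have hpow : ∀ (r : ℝ), r ≠ 0 → ∀ (u : ℝ → ℝ) (i : ℕ),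
      (|u (b i) - u (a i)| * w i ^ (1 / r)) ^ r = |u (b i) - u (a i)| ^ r / lam (i + 1) := by
    intro r hr u i
    rw [Real.mul_rpow (abs_nonneg _) (Real.rpow_nonneg (hw i).le _), ← Real.rpow_mul (hw i).le,
      one_div_mul_cancel hr, Real.rpow_one, div_eq_mul_inv]
  calc ∑ i ∈ Finset.range m, |f (b i) - f (a i)| * |g (b i) - g (a i)| / lam (i + 1)
      = ∑ i ∈ Finset.range m,
          (|f (b i) - f (a i)| * w i ^ (1 / p)) * (|g (b i) - g (a i)| * w i ^ (1 / q)) := by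
        refine Finset.sum_congr rfl fun i _ => ?_
        rw [mul_mul_mul_comm, ← Real.rpow_add (hw i), one_div, one_div,
          hpq.inv_add_inv_eq_one, Real.rpow_one, div_eq_mul_inv]
    _ ≤ (∑ i ∈ Finset.range m, (|f (b i) - f (a i)| * w i ^ (1 / p)) ^ p) ^ (1 / p) *
          (∑ i ∈ Finset.range m, (|g (b i) - g (a i)| * w i ^ (1 / q)) ^ q) ^ (1 / q) :=
        Real.inner_le_Lp_mul_Lq_of_nonneg _ hpq
          (fun i _ => by have := hw i; positivity) (fun i _ => by have := hw i; positivity)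
    _ = vSum lam p f m a b * vSum lam q g m a b := by
        simp only [hpow p hpq.ne_zero, hpow q hpq.symm.ne_zero, vSum]

lemma ofReal_sum_abs_mul_abs_div_le_variation_mul_variation (hlam : ∀ i, 0 < lam i)
    {p q : ℝ} (hpq : p.HolderConjugate q) (f g : ℝ → ℝ) {m : ℕ} {a b : ℕ → ℝ}
    (h : NonOverlapping m a b) :
    ENNReal.ofReal (∑ i ∈ Finset.range m, |f (b i) - f (a i)| * |g (b i) - g (a i)| / lam (i + 1))
      ≤ variation lam p f * variation lam q g := by
  have hv : 0 ≤ vSum lam p f m a b := Real.rpow_nonneg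
    (Finset.sum_nonneg fun i _ => div_nonneg (by positivity) (hlam _).le) _
  calc _ ≤ ENNReal.ofReal (vSum lam p f m a b * vSum lam q g m a b) :=
        ENNReal.ofReal_le_ofReal (sum_abs_mul_abs_div_le_vSum_mul_vSum hlam hpq f g m a b)
    _ = ENNReal.ofReal (vSum lam p f m a b) * ENNReal.ofReal (vSum lam q g m a b) :=
        ENNReal.ofReal_mul hv
    _ ≤ variation lam p f * variation lam q g :=
        mul_le_mul' (ofReal_vSum_le_variation h) (ofReal_vSum_le_variation h)

end Variation

section Points

lemma Mseq_add_two_sub_two_div_two (k : ℕ) : (Mseq (k + 2) - 2) / 2 = 2 ^ (3 * k + 4) - 1 := by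
  have h : Mseq (k + 2) = 2 ^ (3 * k + 4) * 2 := by
    rw [Mseq, ← pow_succ, show 3 * (k + 2) - 1 = 3 * k + 4 + 1 by omega]
  have := Nat.one_le_two_pow (n := 3 * k + 4)
  omega

lemma cast_Mseq_add_two_sub_two_div_two (k : ℕ) :
    (((Mseq (k + 2) - 2) / 2 : ℕ) : ℝ) = 2 ^ (3 * k + 4) - 1 := by
  rw [Mseq_add_two_sub_two_div_two, Nat.cast_sub Nat.one_le_two_pow, Nat.cast_pow,
    Nat.cast_ofNat, Nat.cast_one]

lemma rr_two_mul (k : ℕ) :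
    rr (2 * k) = 3 / 8 * ((2 : ℝ) ^ k)⁻¹ - 3 / 256 * ((2 : ℝ) ^ k)⁻¹ ^ 4 := by
  rw [rr, if_pos (by omega), show 2 * k / 2 = k by omega, cc,
    cast_Mseq_add_two_sub_two_div_two]
  field_simp
  ring

lemma rr_two_mul_add_one (k : ℕ) :
    rr (2 * k + 1) = 3 / 8 * ((2 : ℝ) ^ k)⁻¹ - 1 / 64 * ((2 : ℝ) ^ k)⁻¹ ^ 4 := by
  rw [rr, if_neg (by omega), show (2 * k + 1) / 2 = k by omega, bb,
    cast_Mseq_add_two_sub_two_div_two]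
  field_simp
  ring

lemma rr_mem_Ico (i : ℕ) : rr i ∈ Ico ((2 : ℝ) ^ (i / 2 + 2))⁻¹ ((2 : ℝ) ^ (i / 2 + 1))⁻¹ := by
  have key : ∀ k : ℕ, ∀ c : ℝ, 0 ≤ c → c ≤ 1 / 64 →
      3 / 8 * ((2 : ℝ) ^ k)⁻¹ - c * ((2 : ℝ) ^ k)⁻¹ ^ 4
        ∈ Ico ((2 : ℝ) ^ (k + 2))⁻¹ ((2 : ℝ) ^ (k + 1))⁻¹ := by
    intro k c hc0 hc1
    simp only [pow_succ, mul_inv]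
    set t := ((2 : ℝ) ^ k)⁻¹
    have ht : 0 < t := by positivity
    have ht4 : t ^ 4 ≤ t :=
      pow_le_of_le_one ht.le (inv_le_one_of_one_le₀ (one_le_pow₀ one_le_two)) (by norm_num)
    have hct : c * t ^ 4 ≤ 1 / 64 * t := by
      nlinarith [mul_le_mul hc1 ht4 (by positivity) (by norm_num)]
    have : 0 ≤ c * t ^ 4 := by positivity
    constructor <;> nlinarith
  obtain ⟨k, rfl | rfl⟩ := Nat.even_or_odd' i
  · rw [rr_two_mul, show 2 * k / 2 = k by omega]
    exact key k _ (by norm_num) (by norm_num)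
  · rw [rr_two_mul_add_one, show (2 * k + 1) / 2 = k by omega]
    exact key k _ (by norm_num) (by norm_num)

lemma rr_succ_le (i : ℕ) : rr (i + 1) ≤ rr i := by
  obtain ⟨k, rfl | rfl⟩ := Nat.even_or_odd' i
  · rw [rr_two_mul, rr_two_mul_add_one]
    have : 0 ≤ ((2 : ℝ) ^ k)⁻¹ ^ 4 := by positivity
    linarith
  · have hlt := (rr_mem_Ico (2 * k + 1 + 1)).2
    have hle := (rr_mem_Ico (2 * k + 1)).1
    rw [show (2 * k + 1 + 1) / 2 + 1 = k + 2 by omega] at hlt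
    rw [show (2 * k + 1) / 2 + 2 = k + 2 by omega] at hle
    exact (hlt.trans_le hle).le

lemma antitone_rr : Antitone rr := antitone_nat_of_succ_le rr_succ_le

lemma rr_pos (i : ℕ) : 0 < rr i := lt_of_lt_of_le (by positivity) (rr_mem_Ico i).1

lemma rr_le_one (i : ℕ) : rr i ≤ 1 :=
  (rr_mem_Ico i).2.le.trans (inv_le_one_of_one_le₀ (one_le_pow₀ one_le_two))

lemma nonOverlapping_rr (N : ℕ) : NonOverlapping N (fun n => rr (n + 1)) rr := by
  refine ⟨fun i _ => ⟨(rr_pos _).le, rr_succ_le i, rr_le_one i⟩, fun i _ j _ hij => ?_⟩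
  rcases hij.lt_or_gt with h | h
  · exact Or.inr (antitone_rr h)
  · exact Or.inl (antitone_rr h)

end Points

section Bump

variable {lam : ℕ → ℝ} {q : ℝ}

lemma one_le_LamSum (hlam : ∀ i, 0 ≤ lam i) (hlam1 : lam 1 = 1) {M : ℕ} (hM : 1 ≤ M) :
    1 ≤ LamSum lam M := by
  have h := Finset.single_le_sum (fun i _ => one_div_nonneg.mpr (hlam i))
    (Finset.mem_Icc.mpr ⟨le_rfl, hM⟩)
  rwa [hlam1, div_one] at h

lemma hfun_nonneg (hlam : ∀ i, 0 ≤ lam i) (hlam1 : lam 1 = 1) (n : ℕ) (y : ℝ) :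
    0 ≤ hfun lam q n y := by
  have := one_le_LamSum hlam hlam1 (Nat.one_le_two_pow (n := 3 * n - 1))
  unfold hfun
  split_ifs <;> positivity

lemma hfun_le (hlam : ∀ i, 0 ≤ lam i) (hlam1 : lam 1 = 1) (hq : 0 ≤ q) (n : ℕ) (y : ℝ) :
    hfun lam q n y ≤ ((2 : ℝ) ^ n)⁻¹ := by
  have hL : LamSum lam (Mseq n) ^ (-(1 / q)) ≤ 1 :=
    Real.rpow_le_one_of_one_le_of_nonpos (one_le_LamSum hlam hlam1 Nat.one_le_two_pow)
      (by simpa using hq)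
  unfold hfun
  split_ifs
  · exact mul_le_of_le_one_right (by positivity) hL
  · positivity

lemma hfun_eq_zero_of_lt {n : ℕ} {y : ℝ} (hy : y < ((2 : ℝ) ^ n)⁻¹) : hfun lam q n y = 0 := by
  refine if_neg fun ⟨j, hj, _, hmem⟩ => hy.not_ge (le_trans ?_ hmem.1)
  have : (1 : ℝ) ≤ j := by exact_mod_cast hj
  rw [bb, le_add_iff_nonneg_right]
  exact div_nonneg (by linarith) (by positivity)

lemma hh_nonneg (hlam : ∀ i, 0 ≤ lam i) (hlam1 : lam 1 = 1) (y : ℝ) : 0 ≤ hh lam q y :=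
  tsum_nonneg fun _ => hfun_nonneg hlam hlam1 _ y

/-- Near `0` only the bumps `h_n` with large `n` can be nonzero. -/
lemma hh_le_of_lt (hlam : ∀ i, 0 ≤ lam i) (hlam1 : lam 1 = 1) (hq : 0 ≤ q) (k : ℕ) {y : ℝ}
    (hy : y < ((2 : ℝ) ^ (k + 1))⁻¹) : hh lam q y ≤ ((2 : ℝ) ^ (k + 1))⁻¹ := by
  set g : ℕ → ℝ := fun n => 4⁻¹ * if k ≤ n then (2 : ℝ)⁻¹ ^ n else 0
  have hbound : ∀ n, hfun lam q (n + 2) y ≤ g n := by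
    intro n
    by_cases hkn : k ≤ n
    · calc hfun lam q (n + 2) y ≤ ((2 : ℝ) ^ (n + 2))⁻¹ := hfun_le hlam hlam1 hq _ y
        _ = g n := by simp only [g, if_pos hkn, pow_add, mul_inv, inv_pow]; norm_num; ring
    · rw [hfun_eq_zero_of_lt (hy.trans_le (inv_pow_le_inv_pow_of_le one_le_two (by omega)))]
      simp [g, hkn]
  have hg : Summable g := by
    refine (Summable.of_nonneg_of_le (fun n => ?_) (fun n => ?_)
      (summable_geometric_of_lt_one (r := (2 : ℝ)⁻¹) (by norm_num) (by norm_num))).mul_left _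
    all_goals split_ifs <;> simp
  calc hh lam q y ≤ ∑' n, g n := Summable.tsum_le_tsum hbound
        (hg.of_nonneg_of_le (fun n => hfun_nonneg hlam hlam1 _ y) hbound) hg
    _ = ((2 : ℝ) ^ (k + 1))⁻¹ := by
        rw [tsum_mul_left, tsum_geometric_inv_two_ge, pow_succ, mul_inv, inv_pow]
        ring

lemma abs_incrJ_hh_le (hlam : ∀ i, 0 ≤ lam i) (hlam1 : lam 1 = 1) (hq : 0 ≤ q) (n : ℕ) :
    |incrJ (hh lam q) n| ≤ ((2 : ℝ) ^ ((n - 1) / 2 + 1))⁻¹ := by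
  have hprev := hh_le_of_lt hlam hlam1 hq _ (rr_mem_Ico (n - 1)).2
  have hcur := (hh_le_of_lt hlam hlam1 hq _ (rr_mem_Ico n).2).trans
    (inv_pow_le_inv_pow_of_le one_le_two (by omega : (n - 1) / 2 + 1 ≤ n / 2 + 1))
  exact abs_sub_le_of_nonneg_of_le (hh_nonneg hlam hlam1 _) hprev (hh_nonneg hlam hlam1 _) hcur

end Bump

section Functional

variable {lam : ℕ → ℝ} {q : ℝ}

lemma abs_psgn_le_one (nseq : ℕ → ℕ) (j : ℕ) : |psgn nseq j| ≤ 1 := by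
  unfold psgn
  split_ifs <;> simp

lemma abs_Lterm_le (hlam : ∀ i, 0 < lam i) (nseq : ℕ → ℕ) (f : ℝ → ℝ) (m : ℕ) :
    |Lterm lam q nseq f m| ≤ ∑ i ∈ Finset.Icc 1 2,
      |incrJ f (2 * m + i)| * |incrJ (hh lam q) (2 * m + i)| / lam (2 * m + i) := by
  rw [Lterm, abs_mul]
  refine (mul_le_of_le_one_left (abs_nonneg _) (abs_psgn_le_one nseq _)).trans
    ((Finset.abs_sum_le_sum_abs _ _).trans_eq (Finset.sum_congr rfl fun i _ => ?_))
  simp [abs_div, abs_mul, abs_of_pos (hlam _)]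

lemma Finset.sum_range_sum_Icc_one_two {M : Type*} [AddCommMonoid M] (u : ℕ → M) (N : ℕ) :
    ∑ m ∈ Finset.range N, ∑ i ∈ Finset.Icc 1 2, u (2 * m + i)
      = ∑ n ∈ Finset.range (2 * N), u (n + 1) := by
  induction N with
  | zero => simp
  | succ N ih =>
    rw [Finset.sum_range_succ, ih, show 2 * (N + 1) = 2 * N + 1 + 1 by ring,
      Finset.sum_range_succ, Finset.sum_range_succ, add_assoc,
      show Finset.Icc 1 2 = {1, 2} by decide, Finset.sum_pair (by norm_num)]

lemma summable_abs_Lterm (hlam : ∀ i, 0 < lam i) (hmono : Monotone lam) (hlam1 : lam 1 = 1)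
    {p : ℝ} (hp : p ≠ 0) (hq : 0 ≤ q) (nseq : ℕ → ℕ) {f : ℝ → ℝ}
    (hf : variation lam p f ≠ ⊤) : Summable fun m => |Lterm lam q nseq f m| := by
  set C := (variation lam p f).toReal
  have hterm : ∀ m, ∀ i ∈ Finset.Icc 1 2,
      |incrJ f (2 * m + i)| * |incrJ (hh lam q) (2 * m + i)| / lam (2 * m + i)
        ≤ C * ((2 : ℝ) ^ (m + 1))⁻¹ := by
    intro m i hi
    have hi := Finset.mem_Icc.mp hi
    have hlam_ge : 1 ≤ lam (2 * m + i) := hlam1 ▸ hmono (by omega)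
    have hfJ : |incrJ f (2 * m + i)| ≤ C := abs_sub_le_toReal_variation hlam1 hp hf
      (rr_pos _).le (antitone_rr (Nat.sub_le _ 1)) (rr_le_one _)
    have hhJ := abs_incrJ_hh_le (fun i => (hlam i).le) hlam1 hq (2 * m + i)
    rw [show (2 * m + i - 1) / 2 = m by omega] at hhJ
    exact (div_le_self (by positivity) hlam_ge).trans
      (mul_le_mul hfJ hhJ (abs_nonneg _) ENNReal.toReal_nonneg)
  refine Summable.of_nonneg_of_le (fun m => abs_nonneg _) (fun m => ?_)
    (summable_geometric_two.mul_left C)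
  calc |Lterm lam q nseq f m|
      ≤ (Finset.Icc 1 2).card • (C * ((2 : ℝ) ^ (m + 1))⁻¹) :=
        (abs_Lterm_le hlam nseq f m).trans (Finset.sum_le_card_nsmul _ _ _ (hterm m))
    _ = C * (1 / 2) ^ m := by
        rw [Nat.card_Icc, nsmul_eq_mul, pow_succ, mul_inv, one_div, inv_pow]
        push_cast
        ring

lemma ofReal_abs_sum_range_Lterm_le (hlam : ∀ i, 0 < lam i) {p : ℝ} (hpq : p.HolderConjugate q)
    (nseq : ℕ → ℕ) (f : ℝ → ℝ) (N : ℕ) :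
    ENNReal.ofReal |∑ m ∈ Finset.range N, Lterm lam q nseq f m|
      ≤ variation lam p f * variation lam q (hh lam q) := by
  calc _ ≤ ENNReal.ofReal (∑ n ∈ Finset.range (2 * N),
          |incrJ f (n + 1)| * |incrJ (hh lam q) (n + 1)| / lam (n + 1)) := by
        refine ENNReal.ofReal_le_ofReal ((Finset.abs_sum_le_sum_abs _ _).trans ?_)
        rw [← Finset.sum_range_sum_Icc_one_two
          (fun n => |incrJ f n| * |incrJ (hh lam q) n| / lam n)]
        exact Finset.sum_le_sum fun m _ => abs_Lterm_le hlam nseq f m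
    _ ≤ _ := ofReal_sum_abs_mul_abs_div_le_variation_mul_variation hlam hpq f (hh lam q)
        (nonOverlapping_rr (2 * N))

end Functional

theorem stmt8_general (lam : ℕ → ℝ) (hlam : WatermanSeq lam) (p q : ℝ)
    (hp : 1 < p) (hpq : 1 / p + 1 / q = 1)
    (nseq : ℕ → ℕ)
    (f : ℝ → ℝ) (hf : variation lam p f < ⊤) :
    (Summable fun m : ℕ => |Lterm lam q nseq f m|) ∧
    ENNReal.ofReal |∑' m : ℕ, Lterm lam q nseq f m|
      ≤ variation lam p f * variation lam q (hh lam q) := by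
  obtain ⟨hpos, hmono, hlam1, -⟩ := hlam
  have hpq' : p.HolderConjugate q :=
    Real.holderConjugate_iff.mpr ⟨hp, by simpa only [one_div] using hpq⟩
  have hsum := summable_abs_Lterm hpos hmono hlam1 hpq'.ne_zero hpq'.symm.pos.le nseq hf.ne
  exact ⟨hsum, le_of_tendsto' (ENNReal.tendsto_ofReal hsum.of_abs.hasSum.tendsto_sum_nat.abs)
    (ofReal_abs_sum_range_Lterm_le hpos hpq' nseq f)⟩

/-- for every `f` with `V_{Λ,p}(f) < ∞` and every strictly increasing sequence
`(n_k)` of positive integers, the series defining `L_{(n_k)}(f)` converges absolutely and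
its absolute value is at most `V_{Λ,p}(f)·V_{Λ,q}(h)`; in particular `L_{(n_k)}` is
well-defined on `ΛBV^{(p)}`. -/
theorem stmt8 (lam : ℕ → ℝ) (hlam : WatermanSeq lam) (p q : ℝ)
    (hp : 1 < p) (hq : 1 < q) (hpq : 1 / p + 1 / q = 1)
    (nseq : ℕ → ℕ) (hmono : StrictMono nseq) (hone : 1 ≤ nseq 1)
    (f : ℝ → ℝ) (hf : variation lam p f < ⊤) :
    (Summable fun m : ℕ => |Lterm lam q nseq f m|) ∧
    ENNReal.ofReal |∑' m : ℕ, Lterm lam q nseq f m|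
      ≤ variation lam p f * variation lam q (hh lam q) :=
  stmt8_general lam hlam p q hp hpq nseq f hf
end
end

section
/- For every strictly increasing sequence (n_k)_{k≥1} of positive integers and every s ≥ 1, L_{(n_k)}(f_{n_s}) = (−1)^{s+1}·(1 + Σ_{i=1}^{2} |h(J_{2(n_s−1)+i})|/λ_{2(n_s−1)+i}). In particular L_{(n_k)}(f_{n_s}) > 1 when s is odd and L_{(n_k)}(f_{n_s}) < −1 when s is even, so the sequence (L_{(n_k)}(f_{n_s}))_{s≥1} does not converge. -/
open Filter Set
open scoped ENNReal Classical

noncomputable section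

lemma Mseq_div (n : ℕ) (hn : 2 ≤ n) : (Mseq n - 2) / 2 = 2 ^ (3 * n - 2) - 1 := by
  have h : Mseq n = 2 * 2 ^ (3 * n - 2) := by
    rw [Mseq, show 3 * n - 1 = 3 * n - 2 + 1 by omega, pow_succ]; ring
  omega

lemma JJ_cast (n : ℕ) : ((2 ^ (3 * n - 2) - 1 : ℕ) : ℝ) = 2 ^ (3 * n - 2) - 1 := by
  have h : (1:ℕ) ≤ 2 ^ (3 * n - 2) := Nat.one_le_two_pow
  rw [Nat.cast_sub h, Nat.cast_pow]; norm_num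

lemma two_pow_split (n : ℕ) (hn : 2 ≤ n) : ((2:ℝ) ^ (3 * n - 1)) = 2 * 2 ^ (3 * n - 2) := by
  rw [show 3 * n - 1 = 3 * n - 2 + 1 by omega, pow_succ]; ring

def rE (n : ℕ) : ℝ := ((2:ℝ) ^ n)⁻¹ + ((2:ℝ) ^ (3 * n - 1) - 3) / 2 ^ (4 * n)
def rO (n : ℕ) : ℝ := ((2:ℝ) ^ n)⁻¹ + ((2:ℝ) ^ (3 * n - 1) - 4) / 2 ^ (4 * n)

lemma bb_top (n : ℕ) (hn : 2 ≤ n) : bb n (2 ^ (3 * n - 2) - 1) = rO n := by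
  rw [bb, rO, JJ_cast, two_pow_split n hn]; ring

lemma cc_top (n : ℕ) (hn : 2 ≤ n) : cc n (2 ^ (3 * n - 2) - 1) = rE n := by
  rw [cc, rE, JJ_cast, two_pow_split n hn]; ring

lemma rO_lt_rE (n : ℕ) : rO n < rE n := by
  rw [rO, rE]
  have h : (0:ℝ) < 2 ^ (4 * n) := by positivity
  gcongr
  linarith

lemma le_rO (n : ℕ) (hn : 2 ≤ n) : ((2:ℝ) ^ n)⁻¹ ≤ rO n := by
  rw [rO]
  have h4 : (4:ℝ) ≤ 2 ^ (3 * n - 1) := by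
    calc (4:ℝ) ≤ 2 ^ 5 := by norm_num
    _ ≤ 2 ^ (3 * n - 1) := by apply pow_le_pow_right₀ (by norm_num) (by omega)
  have h0 : (0:ℝ) ≤ (2 ^ (3 * n - 1) - 4) / 2 ^ (4 * n) :=
    div_nonneg (by linarith) (by positivity)
  linarith

lemma rE_lt (n : ℕ) (hn : 2 ≤ n) : rE n < 3 / 2 ^ (n + 1) := by
  have hA : (0:ℝ) < 2 ^ n := by positivity
  have hB : (0:ℝ) < 2 ^ (3 * n - 1) := by positivity
  have hkey : (2:ℝ) ^ (4 * n) = 2 ^ (3 * n - 1) * 2 ^ (n + 1) := by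
    rw [← pow_add]; congr 1; omega
  rw [rE, hkey, pow_succ, inv_eq_one_div]
  rw [div_add_div _ _ (by positivity) (by positivity), div_lt_div_iff₀ (by positivity) (by positivity)]
  ring_nf
  nlinarith [hA, hB, mul_pos hA hB, pow_pos (show (0:ℝ) < 2 by norm_num) (n * 2)]

lemma three_div_lt (a b : ℕ) (h : a + 1 ≤ b) : (3:ℝ) / 2 ^ (b + 1) < ((2:ℝ) ^ a)⁻¹ := by
  have hA : (0:ℝ) < 2 ^ a := by positivity
  have h1 : (3:ℝ) / 2 ^ (b + 1) ≤ 3 / 2 ^ (a + 2) := by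
    apply div_le_div_of_nonneg_left (by norm_num) (by positivity)
    exact pow_le_pow_right₀ (by norm_num) (by omega)
  have h2 : (3:ℝ) / 2 ^ (a + 2) < ((2:ℝ) ^ a)⁻¹ := by
    rw [pow_add, inv_eq_one_div, div_lt_div_iff₀ (by positivity) hA]
    nlinarith [hA]
  linarith
lemma rr_even_eq (k : ℕ) : rr (2 * k) = rE (k + 2) := by
  rw [rr, if_pos (by omega : 2 * k % 2 = 0), show 2 * k / 2 = k by omega,
    Mseq_div (k + 2) (by omega)]
  exact cc_top (k + 2) (by omega)

lemma rr_odd_eq (k : ℕ) : rr (2 * k + 1) = rO (k + 2) := by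
  rw [rr, if_neg (by omega : ¬ (2 * k + 1) % 2 = 0), show (2 * k + 1) / 2 = k by omega,
    Mseq_div (k + 2) (by omega)]
  exact bb_top (k + 2) (by omega)

lemma rr_bounds (i : ℕ) :
    ((2:ℝ) ^ (i / 2 + 2))⁻¹ ≤ rr i ∧ rr i < 3 / 2 ^ (i / 2 + 2 + 1) := by
  rcases Nat.even_or_odd i with ⟨k, hk⟩ | ⟨k, hk⟩
  · have hi : i = 2 * k := by omega
    subst hi
    rw [show 2 * k / 2 = k by omega, rr_even_eq]
    exact ⟨(le_rO (k + 2) (by omega)).trans (rO_lt_rE (k + 2)).le, rE_lt (k + 2) (by omega)⟩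
  · have hi : i = 2 * k + 1 := by omega
    subst hi
    rw [show (2 * k + 1) / 2 = k by omega, rr_odd_eq]
    exact ⟨le_rO (k + 2) (by omega), (rO_lt_rE (k + 2)).trans (rE_lt (k + 2) (by omega))⟩

lemma rr_succ_lt (i : ℕ) : rr (i + 1) < rr i := by
  rcases Nat.even_or_odd i with ⟨k, hk⟩ | ⟨k, hk⟩
  · have hi : i = 2 * k := by omega
    subst hi
    rw [show 2 * k + 1 = 2 * k + 1 from rfl, rr_odd_eq, rr_even_eq]
    exact rO_lt_rE (k + 2)
  · have hi : i = 2 * k + 1 := by omega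
    subst hi
    rw [show 2 * k + 1 + 1 = 2 * (k + 1) by omega]
    have h1 : rr (2 * (k + 1)) < 3 / 2 ^ (k + 4) := by
      have h := (rr_bounds (2 * (k + 1))).2
      rwa [show 2 * (k + 1) / 2 + 2 + 1 = k + 4 by omega] at h
    have h2 : ((2:ℝ) ^ (k + 2))⁻¹ ≤ rr (2 * k + 1) := by
      have h := (rr_bounds (2 * k + 1)).1
      rwa [show (2 * k + 1) / 2 + 2 = k + 2 by omega] at h
    have h3 : (3:ℝ) / 2 ^ (k + 4) < ((2:ℝ) ^ (k + 2))⁻¹ := by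
      have h := three_div_lt (k + 2) (k + 3) (by omega)
      rwa [show k + 3 + 1 = k + 4 by omega] at h
    linarith

lemma rr_strictAnti : StrictAnti rr := strictAnti_nat_of_succ_lt rr_succ_lt

lemma rr_lt_38 (i : ℕ) : rr i < 3 / 8 := by
  have h1 := (rr_bounds i).2
  have h2 : (3:ℝ) / 2 ^ (i / 2 + 2 + 1) ≤ 3 / 8 := by
    apply div_le_div_of_nonneg_left (by norm_num) (by norm_num)
    calc (8:ℝ) = 2 ^ 3 := by norm_num
    _ ≤ 2 ^ (i / 2 + 2 + 1) := pow_le_pow_right₀ (by norm_num) (by omega)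
  linarith
lemma hfun_zero_left (lam : ℕ → ℝ) (q : ℝ) (m : ℕ) (y : ℝ)
    (hy : y < ((2:ℝ) ^ m)⁻¹) : hfun lam q m y = 0 := by
  rw [hfun, if_neg]
  rintro ⟨j, hj1, _, hmem⟩
  have hj1' : (1:ℝ) ≤ (j:ℝ) := by exact_mod_cast hj1
  have hb : ((2:ℝ) ^ m)⁻¹ ≤ bb m j := by
    rw [bb]
    have h0 : (0:ℝ) ≤ (2 * (j:ℝ) - 2) / 2 ^ (4 * m) :=
      div_nonneg (by linarith) (by positivity)
    linarith
  have := hmem.1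
  linarith

lemma cc_le_rE (lam : ℕ → ℝ) (m j : ℕ) (hm : 2 ≤ m) (hj : j ≤ (Mseq m - 2) / 2) :
    cc m j ≤ rE m := by
  have hj' : (j:ℝ) ≤ 2 ^ (3 * m - 2) - 1 := by
    rw [Mseq_div m hm] at hj
    have := (Nat.cast_le (α := ℝ)).mpr hj
    rwa [JJ_cast] at this
  rw [cc, rE, two_pow_split m hm]
  have h : (0:ℝ) < 2 ^ (4 * m) := by positivity
  have : (2 * (j:ℝ) - 1) ≤ 2 * 2 ^ (3 * m - 2) - 3 := by linarith
  gcongr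

lemma hfun_zero_right (lam : ℕ → ℝ) (q : ℝ) (m : ℕ) (hm : 2 ≤ m) (y : ℝ)
    (hy : 3 / 2 ^ (m + 1) ≤ y) : hfun lam q m y = 0 := by
  rw [hfun, if_neg]
  rintro ⟨j, hj1, hj2, hmem⟩
  have h1 : cc m j ≤ rE m := cc_le_rE lam m j hm hj2
  have h2 := rE_lt m hm
  have := hmem.2
  linarith

lemma hfun_at_rO (lam : ℕ → ℝ) (q : ℝ) (m : ℕ) (hm : 2 ≤ m) :
    hfun lam q m (rO m) = ((2:ℝ) ^ m)⁻¹ * LamSum lam (Mseq m) ^ (-(1 / q)) := by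
  rw [hfun, if_pos]
  refine ⟨2 ^ (3 * m - 2) - 1, ?_, ?_, ?_⟩
  · have : 2 ^ 4 ≤ 2 ^ (3 * m - 2) := Nat.pow_le_pow_right (by norm_num) (by omega)
    omega
  · rw [Mseq_div m hm]
  · rw [Set.mem_Ico, bb_top m hm, cc_top m hm]
    exact ⟨le_refl _, rO_lt_rE m⟩

lemma hfun_at_rE (lam : ℕ → ℝ) (q : ℝ) (m : ℕ) (hm : 2 ≤ m) :
    hfun lam q m (rE m) = 0 := by
  rw [hfun, if_neg]
  rintro ⟨j, hj1, hj2, hmem⟩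
  exact absurd hmem.2 (not_lt.mpr (cc_le_rE lam m j hm hj2))

lemma hfun_rr_of_ne (lam : ℕ → ℝ) (q : ℝ) (n i : ℕ) (hne : n ≠ i / 2) :
    hfun lam q (n + 2) (rr i) = 0 := by
  obtain ⟨hlo, hhi⟩ := rr_bounds i
  rcases lt_or_gt_of_ne hne with h | h
  · apply hfun_zero_left
    have h3 := three_div_lt (n + 2) (i / 2 + 2) (by omega)
    linarith
  · apply hfun_zero_right lam q (n + 2) (by omega)
    have h3 : (3:ℝ) / 2 ^ (n + 2 + 1) < ((2:ℝ) ^ (i / 2 + 2))⁻¹ :=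
      three_div_lt (i / 2 + 2) (n + 2) (by omega)
    linarith

lemma hh_rr_even (lam : ℕ → ℝ) (q : ℝ) (k : ℕ) : hh lam q (rr (2 * k)) = 0 := by
  rw [hh]
  have hz : ∀ n : ℕ, hfun lam q (n + 2) (rr (2 * k)) = 0 := by
    intro n
    rcases eq_or_ne n k with rfl | hne
    · rw [rr_even_eq]; exact hfun_at_rE lam q (n + 2) (by omega)
    · exact hfun_rr_of_ne lam q n (2 * k) (by omega)
  simp only [hz, tsum_zero]

lemma hh_rr_odd (lam : ℕ → ℝ) (q : ℝ) (k : ℕ) :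
    hh lam q (rr (2 * k + 1)) =
      ((2:ℝ) ^ (k + 2))⁻¹ * LamSum lam (Mseq (k + 2)) ^ (-(1 / q)) := by
  rw [hh, tsum_eq_single k (fun n hn => hfun_rr_of_ne lam q n (2 * k + 1) (by omega)),
    rr_odd_eq]
  exact hfun_at_rO lam q (k + 2) (by omega)

lemma val_pos (lam : ℕ → ℝ) (hlam : WatermanSeq lam) (q : ℝ) (k : ℕ) :
    0 < ((2:ℝ) ^ (k + 2))⁻¹ * LamSum lam (Mseq (k + 2)) ^ (-(1 / q)) := by
  apply mul_pos (by positivity)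
  apply Real.rpow_pos_of_pos
  apply Finset.sum_pos
  · intro i _; exact div_pos one_pos (hlam.1 i)
  · exact ⟨1, Finset.mem_Icc.mpr ⟨le_refl 1, Nat.one_le_two_pow⟩⟩
lemma tent_at_high (nseq : ℕ → ℕ) (l : ℕ) :
    tent nseq l (3 / 8 + 1 / 2 ^ 8) = psgn nseq l := by
  rw [tent, if_pos ⟨by norm_num, le_refl _⟩]

lemma tent_at_38 (nseq : ℕ → ℕ) (l : ℕ) : tent nseq l (3 / 8 : ℝ) = 0 := by
  rw [tent, if_neg (fun h => absurd h.1 (lt_irrefl _)),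
    if_neg (fun h => absurd h.2 (not_le.mpr (rr_lt_38 _))),
    if_neg (fun h => absurd h.2 (not_le.mpr (rr_lt_38 _)))]

lemma tent_rr (nseq : ℕ → ℕ) (l : ℕ) (hl : 1 ≤ l) (j : ℕ) :
    tent nseq l (rr j) = if j = 2 * l - 1 then 1 else 0 := by
  have hanti := rr_strictAnti
  rw [tent, if_neg (fun h => absurd h.1 (not_lt.mpr (rr_lt_38 j).le))]
  by_cases hj : j = 2 * l - 1
  · subst hj
    rw [if_pos rfl, if_pos ⟨hanti.antitone (by omega), le_refl _⟩]
    exact div_self (sub_ne_zero.mpr (hanti (show 2 * l - 1 < 2 * l by omega)).ne')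
  · rw [if_neg hj]
    have hcase : j < 2 * l - 2 ∨ j = 2 * l - 2 ∨ j = 2 * l ∨ 2 * l < j := by omega
    rcases hcase with h | h | h | h
    · rw [if_neg (fun hc => absurd hc.2 (not_le.mpr (hanti (show j < 2 * l - 1 by omega)))),
        if_neg (fun hc => absurd hc.2 (not_le.mpr (hanti (show j < 2 * l - 2 by omega))))]
    · subst h
      rw [if_neg (fun hc => absurd hc.2
          (not_le.mpr (hanti (show 2 * l - 2 < 2 * l - 1 by omega)))),
        if_pos ⟨hanti.antitone (by omega), le_refl _⟩, sub_self, zero_div]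
    · subst h
      rw [if_pos ⟨le_refl _, hanti.antitone (by omega)⟩, sub_self, zero_div]
    · rw [if_neg (fun hc => absurd hc.1 (not_le.mpr (hanti h))),
        if_neg (fun hc => absurd hc.1 (not_le.mpr (hanti (show 2 * l - 1 < j by omega))))]

lemma incrJ_tent (nseq : ℕ → ℕ) (l : ℕ) (hl : 1 ≤ l) (i : ℕ) (hi : 1 ≤ i) :
    incrJ (tent nseq l) i = if i = 2 * l then 1 else if i = 2 * l - 1 then -1 else 0 := by
  rw [incrJ, tent_rr nseq l hl, tent_rr nseq l hl]
  by_cases h1 : i = 2 * l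
  · rw [if_pos (by omega : i - 1 = 2 * l - 1), if_neg (by omega : ¬ i = 2 * l - 1),
      if_pos h1]
    norm_num
  · by_cases h2 : i = 2 * l - 1
    · rw [if_neg (by omega : ¬ i - 1 = 2 * l - 1), if_pos h2, if_neg h1, if_pos h2]
      norm_num
    · rw [if_neg (by omega : ¬ i - 1 = 2 * l - 1), if_neg h2, if_neg h1, if_neg h2]
      norm_num

lemma psgn_nseq (nseq : ℕ → ℕ) (hmono : StrictMono nseq) (s : ℕ) (hs : 1 ≤ s) :
    psgn nseq (nseq s) = (-1 : ℝ) ^ (s + 1) := by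
  have hex : ∃ k, 1 ≤ k ∧ nseq k = nseq s := ⟨s, hs, rfl⟩
  rw [psgn, dif_pos hex]
  have h := hmono.injective hex.choose_spec.2
  rw [h]

lemma Lterm_zero (lam : ℕ → ℝ) (q : ℝ) (nseq : ℕ → ℕ) (l : ℕ) (hl : 1 ≤ l)
    (m : ℕ) (hm : m ≠ l - 1) : Lterm lam q nseq (tent nseq l) m = 0 := by
  have hz : ∀ i ∈ Finset.Icc 1 2,
      (-1 : ℝ) ^ i * incrJ (tent nseq l) (2 * m + i) *
        |incrJ (hh lam q) (2 * m + i)| / lam (2 * m + i) = 0 := by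
    intro i hi
    rw [Finset.mem_Icc] at hi
    rw [incrJ_tent nseq l hl _ (by omega), if_neg (by omega), if_neg (by omega)]
    ring
  rw [Lterm, Finset.sum_eq_zero hz, mul_zero]

lemma Lterm_main (lam : ℕ → ℝ) (q : ℝ) (nseq : ℕ → ℕ) (l : ℕ) (hl : 1 ≤ l) :
    Lterm lam q nseq (tent nseq l) (l - 1) =
      psgn nseq l * ∑ i ∈ Finset.Icc 1 2,
        |incrJ (hh lam q) (2 * (l - 1) + i)| / lam (2 * (l - 1) + i) := by
  rw [Lterm, show l - 1 + 1 = l by omega]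
  congr 1
  rw [show (Finset.Icc 1 2 : Finset ℕ) = {1, 2} by decide,
    Finset.sum_insert (by decide), Finset.sum_singleton,
    Finset.sum_insert (by decide), Finset.sum_singleton]
  rw [incrJ_tent nseq l hl _ (by omega), incrJ_tent nseq l hl _ (by omega),
    if_neg (by omega : ¬ 2 * (l - 1) + 1 = 2 * l),
    if_pos (by omega : 2 * (l - 1) + 1 = 2 * l - 1),
    if_pos (by omega : 2 * (l - 1) + 2 = 2 * l)]
  ring

lemma S_pos (lam : ℕ → ℝ) (hlam : WatermanSeq lam) (q : ℝ) (l : ℕ) (hl : 1 ≤ l) :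
    0 < ∑ i ∈ Finset.Icc 1 2,
        |incrJ (hh lam q) (2 * (l - 1) + i)| / lam (2 * (l - 1) + i) := by
  have hv := val_pos lam hlam q (l - 1)
  have h1 : incrJ (hh lam q) (2 * (l - 1) + 1) =
      -(((2:ℝ) ^ (l - 1 + 2))⁻¹ * LamSum lam (Mseq (l - 1 + 2)) ^ (-(1 / q))) := by
    rw [incrJ, show 2 * (l - 1) + 1 - 1 = 2 * (l - 1) by omega, hh_rr_even, hh_rr_odd]
    ring
  have h2 : incrJ (hh lam q) (2 * (l - 1) + 2) =
      ((2:ℝ) ^ (l - 1 + 2))⁻¹ * LamSum lam (Mseq (l - 1 + 2)) ^ (-(1 / q)) := by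
    rw [incrJ, show 2 * (l - 1) + 2 - 1 = 2 * (l - 1) + 1 by omega,
      show 2 * (l - 1) + 2 = 2 * l by omega, hh_rr_odd, hh_rr_even]
    ring
  rw [show (Finset.Icc 1 2 : Finset ℕ) = {1, 2} by decide,
    Finset.sum_insert (by decide), Finset.sum_singleton, h1, h2, abs_neg,
    abs_of_pos hv]
  have hl1 := hlam.1 (2 * (l - 1) + 1)
  have hl2 := hlam.1 (2 * (l - 1) + 2)
  exact add_pos (div_pos hv hl1) (div_pos hv hl2)

lemma Lfun_val (lam : ℕ → ℝ) (q : ℝ) (nseq : ℕ → ℕ) (hmono : StrictMono nseq)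
    (hone : 1 ≤ nseq 1) (s : ℕ) (hs : 1 ≤ s) :
    Lfun lam q nseq (tent nseq (nseq s)) =
      (-1 : ℝ) ^ (s + 1) * (1 + ∑ i ∈ Finset.Icc 1 2,
        |incrJ (hh lam q) (2 * (nseq s - 1) + i)| / lam (2 * (nseq s - 1) + i)) := by
  have hl : 1 ≤ nseq s := hone.trans (hmono.monotone hs)
  rw [Lfun, tent_at_high, tent_at_38,
    tsum_eq_single (nseq s - 1) (fun m hm => Lterm_zero lam q nseq (nseq s) hl m hm),
    Lterm_main lam q nseq (nseq s) hl, psgn_nseq nseq hmono s hs]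
  ring

/-- for every `s ≥ 1`,
`L_{(n_k)}(f_{n_s}) = (−1)^{s+1}(1 + ∑_{i=1}^2 |h(J_{2(n_s−1)+i})|/λ_{2(n_s−1)+i})`;
hence `L_{(n_k)}(f_{n_s}) > 1` for odd `s`, `< −1` for even `s`, and the sequence
`(L_{(n_k)}(f_{n_s}))_{s ≥ 1}` does not converge. -/
theorem stmt13 (lam : ℕ → ℝ) (hlam : WatermanSeq lam) (p q : ℝ)
    (hp : 1 < p) (hq : 1 < q) (hpq : 1 / p + 1 / q = 1)
    (nseq : ℕ → ℕ) (hmono : StrictMono nseq) (hone : 1 ≤ nseq 1) :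
    (∀ s : ℕ, 1 ≤ s →
      Lfun lam q nseq (tent nseq (nseq s)) =
        (-1 : ℝ) ^ (s + 1) * (1 + ∑ i ∈ Finset.Icc 1 2,
          |incrJ (hh lam q) (2 * (nseq s - 1) + i)| / lam (2 * (nseq s - 1) + i)) ∧
      (Odd s → 1 < Lfun lam q nseq (tent nseq (nseq s))) ∧
      (Even s → Lfun lam q nseq (tent nseq (nseq s)) < -1)) ∧
    ¬ ∃ c : ℝ, Tendsto (fun s : ℕ => Lfun lam q nseq (tent nseq (nseq (s + 1))))
      atTop (nhds c) := by

  have key : ∀ s : ℕ, 1 ≤ s →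
      Lfun lam q nseq (tent nseq (nseq s)) =
        (-1 : ℝ) ^ (s + 1) * (1 + ∑ i ∈ Finset.Icc 1 2,
          |incrJ (hh lam q) (2 * (nseq s - 1) + i)| / lam (2 * (nseq s - 1) + i)) ∧
      (Odd s → 1 < Lfun lam q nseq (tent nseq (nseq s))) ∧
      (Even s → Lfun lam q nseq (tent nseq (nseq s)) < -1) := by
    intro s hs
    have hmain := Lfun_val lam q nseq hmono hone s hs
    have hS := S_pos lam hlam q (nseq s) (hone.trans (hmono.monotone hs))
    refine ⟨hmain, ?_, ?_⟩
    · intro hodd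
      rw [hmain, Even.neg_one_pow hodd.add_one, one_mul]
      linarith
    · intro heven
      rw [hmain, Odd.neg_one_pow heven.add_one]
      linarith
  refine ⟨key, ?_⟩
  rintro ⟨c, hc⟩
  have ht1 : Tendsto (fun t : ℕ => 2 * t) atTop atTop :=
    tendsto_atTop_mono (fun n => by simp only [id_eq]; omega) tendsto_id
  have ht2 : Tendsto (fun t : ℕ => 2 * t + 1) atTop atTop :=
    tendsto_atTop_mono (fun n => by simp only [id_eq]; omega) tendsto_id
  have hA : Tendsto (fun t : ℕ => Lfun lam q nseq (tent nseq (nseq (2 * t + 1))))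
      atTop (nhds c) := hc.comp ht1
  have hB : Tendsto (fun t : ℕ => Lfun lam q nseq (tent nseq (nseq (2 * t + 1 + 1))))
      atTop (nhds c) := hc.comp ht2
  have hc1 : (1:ℝ) ≤ c :=
    ge_of_tendsto' hA (fun t =>
      ((key (2 * t + 1) (by omega)).2.1 (Nat.odd_iff.mpr (by omega))).le)
  have hc2 : c ≤ -1 :=
    le_of_tendsto' hB (fun t =>
      ((key (2 * t + 1 + 1) (by omega)).2.2 (Nat.even_iff.mpr (by omega))).le)
  linarith
end
end
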